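/- Let M be an R-module with Gwid_R(M) = n < ∞ admitting a WI-pure Tate injective resolution. Then the injective dimension id_R(M) ≤ n if and only if the relative Tate cohomology Ext-hat^i_{GWI}(N, M) = 0 for every R-module N and every integer i, if and only if Ext-hat^i_{GWI}(R/I, M) = 0 for every left ideal I of R and every integer i. -/

import Mathlib

open CategoryTheory

universe u

noncomputable section

variable (R : Type u) [Ring R]

/-- Vanishing of `Ext^n_R(N, M)` for left `R`-modules, expressed via the `Ext` bifunctor
on the `ℤ`-linear abelian category `ModuleCat R`. -/
def ExtVanish (n : ℕ) (N M : ModuleCat.{u} R) : Prop :=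
  Subsingleton (((_root_.Ext ℤ (ModuleCat.{u} R) n).obj (Opposite.op N)).obj M)

/-- An `R`-module is super finitely presented if it admits a resolution by
finitely generated projective modules. -/
def SuperFinitelyPresented (N : ModuleCat.{u} R) : Prop :=
  ∃ (F : ℕ → ModuleCat.{u} R) (d : ∀ n, F (n + 1) →ₗ[R] F n) (ε : F 0 →ₗ[R] N),
    (∀ n, Module.Finite R (F n)) ∧ (∀ n, Module.Projective R (F n)) ∧
    Function.Surjective ε ∧ Function.Exact (d 0) ε ∧
    (∀ n, Function.Exact (d (n + 1)) (d n))

/-- An `R`-module `W` is weak injective if `Ext^1_R(N, W) = 0` for every super finitely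
presented module `N`. -/
def WeakInjective (W : ModuleCat.{u} R) : Prop :=
  ∀ N : ModuleCat.{u} R, SuperFinitelyPresented R N → ExtVanish R 1 N W

/-- `wid_R M ≤ n` : `Ext^{n+1}_R(N, M) = 0` for every super finitely presented `N`. -/
def WidLE (M : ModuleCat.{u} R) (n : ℕ) : Prop :=
  ∀ N : ModuleCat.{u} R, SuperFinitelyPresented R N → ExtVanish R (n + 1) N M

/-- The weak injective dimension, as an element of `ℕ∞`. -/
def Wid (M : ModuleCat.{u} R) : ℕ∞ :=
  sInf {c : ℕ∞ | ∃ n : ℕ, c = n ∧ WidLE R M n}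

/-- A doubly infinite exact complex of injective modules which stays exact after applying
`Hom_R(W, -)` for every module `W` in the test class `𝒯`. -/
def IsTotallyAcyclicInjComplex (𝒯 : ModuleCat.{u} R → Prop)
    (I : ℤ → ModuleCat.{u} R) (d : ∀ n : ℤ, I n →ₗ[R] I (n + 1)) : Prop :=
  (∀ n, Module.Injective R (I n)) ∧
  (∀ n, Function.Exact (d n) (d (n + 1))) ∧
  (∀ W : ModuleCat.{u} R, 𝒯 W → ∀ n,
    Function.Exact (fun g : W →ₗ[R] I n => (d n).comp g)
      (fun g : W →ₗ[R] I (n + 1) => (d (n + 1)).comp g))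

/-- `M` is Gorenstein injective relative to the test class `𝒯` : `M` is the cokernel
`Coker (I_1 → I_0)` of a `Hom(𝒯, -)`-exact exact complex of injective modules. -/
def GorensteinRelInjective (𝒯 : ModuleCat.{u} R → Prop) (M : ModuleCat.{u} R) : Prop :=
  ∃ (I : ℤ → ModuleCat.{u} R) (d : ∀ n : ℤ, I n →ₗ[R] I (n + 1)) (π : I 0 →ₗ[R] M),
    IsTotallyAcyclicInjComplex R 𝒯 I d ∧
    Function.Surjective π ∧ Function.Exact (d (-1)) π

/-- Gorenstein weak injective modules: the test class is that of weak injective modules. -/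
def GorensteinWeakInjective (M : ModuleCat.{u} R) : Prop :=
  GorensteinRelInjective R (WeakInjective R) M

/-- Gorenstein injective modules: the test class is that of injective modules. -/
def GorensteinInjective (M : ModuleCat.{u} R) : Prop :=
  GorensteinRelInjective R (fun E => Module.Injective R E) M

/-- The data of an exact sequence `0 → M → G^0 → ⋯ → G^n → 0` (the modules `G^i` for
`i > n` being trivial). -/
def IsFiniteCoresolution (M : ModuleCat.{u} R) (n : ℕ) (G : ℕ → ModuleCat.{u} R)
    (d : ∀ i, G i →ₗ[R] G (i + 1)) (ε : M →ₗ[R] G 0) : Prop :=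
  Function.Injective ε ∧ Function.Exact ε (d 0) ∧
  (∀ i, Function.Exact (d i) (d (i + 1))) ∧
  (∀ i, n < i → ∀ x : G i, x = 0)

/-- `Gwid_R M ≤ n` : `M` has a coresolution of length `n` by Gorenstein weak injective
modules. -/
def GwidLE (M : ModuleCat.{u} R) (n : ℕ) : Prop :=
  ∃ (G : ℕ → ModuleCat.{u} R) (d : ∀ i, G i →ₗ[R] G (i + 1)) (ε : M →ₗ[R] G 0),
    IsFiniteCoresolution R M n G d ε ∧ ∀ i, GorensteinWeakInjective R (G i)

/-- The Gorenstein weak injective dimension, as an element of `ℕ∞`. -/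
def Gwid (M : ModuleCat.{u} R) : ℕ∞ :=
  sInf {c : ℕ∞ | ∃ n : ℕ, c = n ∧ GwidLE R M n}

/-- `Gid_R M ≤ n`, via coresolutions by Gorenstein injective modules. -/
def GidLE (M : ModuleCat.{u} R) (n : ℕ) : Prop :=
  ∃ (G : ℕ → ModuleCat.{u} R) (d : ∀ i, G i →ₗ[R] G (i + 1)) (ε : M →ₗ[R] G 0),
    IsFiniteCoresolution R M n G d ε ∧ ∀ i, GorensteinInjective R (G i)

/-- The Gorenstein injective dimension, as an element of `ℕ∞`. -/
def Gid (M : ModuleCat.{u} R) : ℕ∞ :=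
  sInf {c : ℕ∞ | ∃ n : ℕ, c = n ∧ GidLE R M n}

/-- `id_R M ≤ n`, via coresolutions by injective modules. -/
def IdLE (M : ModuleCat.{u} R) (n : ℕ) : Prop :=
  ∃ (G : ℕ → ModuleCat.{u} R) (d : ∀ i, G i →ₗ[R] G (i + 1)) (ε : M →ₗ[R] G 0),
    IsFiniteCoresolution R M n G d ε ∧ ∀ i, Module.Injective R (G i)

/-- The injective dimension, as an element of `ℕ∞`. -/
def Idim (M : ModuleCat.{u} R) : ℕ∞ :=
  sInf {c : ℕ∞ | ∃ n : ℕ, c = n ∧ IdLE R M n}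

/-- The data of an exact sequence `0 → P_n → ⋯ → P_0 → M → 0`. -/
def IsFiniteResolution (M : ModuleCat.{u} R) (n : ℕ) (P : ℕ → ModuleCat.{u} R)
    (d : ∀ i, P (i + 1) →ₗ[R] P i) (ε : P 0 →ₗ[R] M) : Prop :=
  Function.Surjective ε ∧ Function.Exact (d 0) ε ∧
  (∀ i, Function.Exact (d (i + 1)) (d i)) ∧
  (∀ i, n < i → ∀ x : P i, x = 0)

/-- `pd_R M ≤ n`, via resolutions by projective modules. -/
def PdLE (M : ModuleCat.{u} R) (n : ℕ) : Prop :=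
  ∃ (P : ℕ → ModuleCat.{u} R) (d : ∀ i, P (i + 1) →ₗ[R] P i) (ε : P 0 →ₗ[R] M),
    IsFiniteResolution R M n P d ε ∧ ∀ i, Module.Projective R (P i)

end

variable (R : Type u) [Ring R]

/-- A short exact sequence `0 → L → M → N → 0` of `R`-modules. -/
def ShortExactSeq (L M N : ModuleCat.{u} R) (f : L →ₗ[R] M) (g : M →ₗ[R] N) : Prop :=
  Function.Injective f ∧ Function.Surjective g ∧ Function.Exact f g

/-- Exactness of `0 → Hom(C, X) → Hom(B, X) → Hom(A, X) → 0` induced by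
`0 → A → B → C → 0`. -/
def HomContraExact (X : ModuleCat.{u} R) {A B C : ModuleCat.{u} R}
    (f : A →ₗ[R] B) (g : B →ₗ[R] C) : Prop :=
  Function.Injective (fun h : C →ₗ[R] X => h.comp g) ∧
  Function.Exact (fun h : C →ₗ[R] X => h.comp g) (fun h : B →ₗ[R] X => h.comp f) ∧
  Function.Surjective (fun h : B →ₗ[R] X => h.comp f)

/-- A short exact sequence is `GWI`-copure exact if `Hom_R(-, X)` leaves it exact for
every Gorenstein weak injective module `X`. -/
def GWICopureExact {A B C : ModuleCat.{u} R} (f : A →ₗ[R] B) (g : B →ₗ[R] C) : Prop :=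
  ShortExactSeq R A B C f g ∧
  ∀ X : ModuleCat.{u} R, GorensteinWeakInjective R X → HomContraExact R X f g

/-- `M` is `GWI`-copure injective if `Hom_R(-, M)` is exact on every `GWI`-copure exact
sequence. -/
def GWICopureInjectiveMod (M : ModuleCat.{u} R) : Prop :=
  ∀ (A B C : ModuleCat.{u} R) (f : A →ₗ[R] B) (g : B →ₗ[R] C),
    GWICopureExact R f g → HomContraExact R M f g

/-- `φ : M → G` is a Gorenstein weak injective preenvelope of `M`. -/
def GWIPreenvelope (M G : ModuleCat.{u} R) (φ : M →ₗ[R] G) : Prop :=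
  GorensteinWeakInjective R G ∧
  ∀ G' : ModuleCat.{u} R, GorensteinWeakInjective R G' →
    ∀ f : M →ₗ[R] G', ∃ g : G →ₗ[R] G', g.comp φ = f

/-- A `WI`-pure Tate injective resolution of `M` : an injective resolution
`0 → M → E^0 → E^1 → ⋯`, a `WI`-pure exact complex `T` of injectives, and a chain map
`u : E → T` which is an isomorphism in all sufficiently large degrees. -/
def WIPureTateInjectiveResolution (M : ModuleCat.{u} R)
    (E : ℕ → ModuleCat.{u} R) (dE : ∀ n, E n →ₗ[R] E (n + 1)) (ε : M →ₗ[R] E 0)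
    (T : ℤ → ModuleCat.{u} R) (dT : ∀ n : ℤ, T n →ₗ[R] T (n + 1))
    (u : ∀ n : ℕ, E n →ₗ[R] T n) : Prop :=
  (∀ n, Module.Injective R (E n)) ∧ Function.Injective ε ∧
  Function.Exact ε (dE 0) ∧ (∀ n, Function.Exact (dE n) (dE (n + 1))) ∧
  IsTotallyAcyclicInjComplex R (WeakInjective R) T dT ∧
  (∀ n : ℕ, (dT n).comp (u n) = (u (n + 1)).comp (dE n)) ∧
  ∃ N : ℕ, ∀ n, N ≤ n → Function.Bijective (u n)

/-- Vanishing of the relative Tate cohomology `Êxt^i_GWI(N, M)` for all `i ∈ ℤ`,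
computed from the `WI`-pure exact complex `T` : the complex `Hom_R(N, T)` is exact. -/
def ExtHatVanishesAll (N : ModuleCat.{u} R) (T : ℤ → ModuleCat.{u} R)
    (dT : ∀ n : ℤ, T n →ₗ[R] T (n + 1)) : Prop :=
  ∀ n : ℤ, Function.Exact (fun g : N →ₗ[R] T n => (dT n).comp g)
    (fun g : N →ₗ[R] T (n + 1) => (dT (n + 1)).comp g)

/-!
All three conditions are equivalent to injectivity of every cycle `Zᶜ = ker dTᶜ` of `T`. If the
cycles are injective, `T` is split and `Hom_R(N, T)` is exact for every `N`; conversely, exactness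
of `Hom_R(R/I, T)` extends maps `I → Zᶜ` to `R`, which is Baer's criterion.

For `m ≫ 0` the cycle `Zᵐ` is the `m`-th cosyzygy `Kᵐ` of `M` in `E`. If `id_R M ≤ n`, Schanuel's
lemma makes `Kᵐ` injective for `m > n`; a single injective cycle makes all of them injective, since
`T` is `Hom_R(W, -)`-exact for injective (hence weak injective) `W`. Conversely, if `Gwid_R M ≤ k`,
dimension shifting along a Gorenstein weak injective coresolution (horseshoe lemma, Schanuel's
lemma) gives `Ext¹_R(W, Kᵏ) = 0` for weak injective `W`. For `k ≥ n`, the sequence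
`0 → Kᵏ → Eᵏ → Kᵏ⁺¹ → 0` then splits as soon as `Kᵏ⁺¹` is injective, and descending from large
`k` shows that `Kⁿ` is injective, i.e. `id_R M ≤ n`.
-/

variable {R}

section LinearAlgebra

variable {A B C W X : Type u} [AddCommGroup A] [Module R A] [AddCommGroup B] [Module R B]
  [AddCommGroup C] [Module R C] [AddCommGroup W] [Module R W] [AddCommGroup X] [Module R X]

theorem Function.Exact.exists_comp_eq_of_comp_eq_zero {f : A →ₗ[R] B} {g : B →ₗ[R] C}
    (hfg : Function.Exact f g) (hg : Function.Surjective g) {h : B →ₗ[R] X}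
    (hh : h ∘ₗ f = 0) : ∃ k : C →ₗ[R] X, k ∘ₗ g = h :=
  ⟨(LinearMap.range f).liftQ h (LinearMap.range_le_ker_iff.mpr hh) ∘ₗ
    (hfg.linearEquivOfSurjective hg).symm.toLinearMap, LinearMap.ext fun b => by simp⟩

def Function.Exact.toKer {f : A →ₗ[R] B} {g : B →ₗ[R] C} (hfg : Function.Exact f g) :
    A →ₗ[R] LinearMap.ker g :=
  f.codRestrict _ fun x => LinearMap.mem_ker.mpr (hfg.apply_apply_eq_zero x)

theorem Function.Exact.toKer_surjective {f : A →ₗ[R] B} {g : B →ₗ[R] C}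
    (hfg : Function.Exact f g) : Function.Surjective hfg.toKer := by
  rintro ⟨b, hb⟩
  obtain ⟨a, rfl⟩ := (hfg b).mp hb
  exact ⟨a, rfl⟩

theorem Function.Exact.exact_toKer {e : X →ₗ[R] A} {f : A →ₗ[R] B} {g : B →ₗ[R] C}
    (hef : Function.Exact e f) (hfg : Function.Exact f g) : Function.Exact e hfg.toKer := by
  refine LinearMap.exact_iff.mpr ?_
  rw [Function.Exact.toKer, LinearMap.ker_codRestrict, hef.linearMap_ker_eq]

theorem Function.Exact.exact_subtype_toKer {f : A →ₗ[R] B} {g : B →ₗ[R] C}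
    (hfg : Function.Exact f g) : Function.Exact (LinearMap.ker f).subtype hfg.toKer :=
  (LinearMap.exact_subtype_ker_map f).exact_toKer hfg

theorem Module.Injective.of_comp_eq_id [Module.Injective R B] (i : A →ₗ[R] B) (r : B →ₗ[R] A)
    (hri : r ∘ₗ i = LinearMap.id) : Module.Injective R A where
  out _ _ _ _ _ _ f hf g := by
    obtain ⟨h, hh⟩ := Module.Injective.out f hf (i ∘ₗ g)
    exact ⟨r ∘ₗ h, fun x => by simpa [hh] using LinearMap.congr_fun hri (g x)⟩

theorem Module.Injective.of_linearEquiv [Module.Injective R A] (e : A ≃ₗ[R] B) :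
    Module.Injective R B :=
  Module.Injective.of_comp_eq_id e.symm.toLinearMap e.toLinearMap (by ext; simp)

instance Module.Injective.prod [Module.Injective R A] [Module.Injective R B] :
    Module.Injective R (A × B) where
  out _ _ _ _ _ _ f hf g := by
    obtain ⟨h₁, hh₁⟩ := Module.Injective.out f hf (LinearMap.fst R A B ∘ₗ g)
    obtain ⟨h₂, hh₂⟩ := Module.Injective.out f hf (LinearMap.snd R A B ∘ₗ g)
    exact ⟨h₁.prod h₂, fun x => Prod.ext (hh₁ x) (hh₂ x)⟩

theorem Module.Injective.of_subsingleton [Subsingleton A] : Module.Injective R A where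
  out _ _ _ _ _ _ _ _ _ := ⟨0, fun _ => Subsingleton.elim _ _⟩

theorem Function.Exact.exists_comp_eq_id_of_injective [Module.Injective R A] {f : A →ₗ[R] B}
    {g : B →ₗ[R] C} (hf : Function.Injective f) (hfg : Function.Exact f g)
    (hg : Function.Surjective g) : ∃ s : C →ₗ[R] B, g ∘ₗ s = LinearMap.id := by
  obtain ⟨r, hr⟩ := Module.Injective.out f hf LinearMap.id
  have hsplit := (hfg.split_tfae hf hg).out 1 0
  exact hsplit.mp ⟨r, LinearMap.ext hr⟩

theorem Function.Exact.exact_precomp_of_injective [Module.Injective R W] {f : A →ₗ[R] B}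
    {g : B →ₗ[R] C} (hfg : Function.Exact f g) :
    Function.Exact (fun h : C →ₗ[R] W => h ∘ₗ g) (fun h : B →ₗ[R] W => h ∘ₗ f) := by
  intro h
  constructor
  · intro hh
    have hf : Function.Exact f g.rangeRestrict :=
      LinearMap.exact_iff.mpr (by rw [LinearMap.ker_rangeRestrict, hfg.linearMap_ker_eq])
    obtain ⟨k₀, hk₀⟩ := hf.exists_comp_eq_of_comp_eq_zero g.surjective_rangeRestrict hh
    obtain ⟨k, hk⟩ := Module.Injective.out (LinearMap.range g).subtype Subtype.val_injective k₀
    exact ⟨k, LinearMap.ext fun b => (hk _).trans (LinearMap.congr_fun hk₀ b)⟩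
  · rintro ⟨k, rfl⟩
    ext b
    simp [hfg.apply_apply_eq_zero]

theorem exists_exact_quotient_range_comp {i : A →ₗ[R] B} {p : B →ₗ[R] C} {j : B →ₗ[R] X}
    {q : X →ₗ[R] W} (hip : Function.Exact i p) (hp : Function.Surjective p)
    (hj : Function.Injective j) (hjq : Function.Exact j q) (hq : Function.Surjective q) :
    ∃ (j' : C →ₗ[R] X ⧸ LinearMap.range (j ∘ₗ i)) (q' : X ⧸ LinearMap.range (j ∘ₗ i) →ₗ[R] W),
      Function.Injective j' ∧ Function.Exact j' q' ∧ Function.Surjective q' ∧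
      q' ∘ₗ (LinearMap.range (j ∘ₗ i)).mkQ = q := by
  set K := LinearMap.range (j ∘ₗ i)
  have hK : K ≤ LinearMap.ker q := by
    rintro _ ⟨a, rfl⟩
    exact hjq.apply_apply_eq_zero (i a)
  obtain ⟨j', hj'⟩ := hip.exists_comp_eq_of_comp_eq_zero hp (h := K.mkQ ∘ₗ j)
    (LinearMap.ext fun a => (Submodule.Quotient.mk_eq_zero K).mpr ⟨a, rfl⟩)
  have hj'p (b : B) : j' (p b) = K.mkQ (j b) := LinearMap.congr_fun hj' b
  refine ⟨j', K.liftQ q hK, ?_, ?_, LinearMap.surjective_range_liftQ _ hq, rfl⟩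
  · refine (injective_iff_map_eq_zero j').mpr fun c hc => ?_
    obtain ⟨b, rfl⟩ := hp c
    obtain ⟨a, ha⟩ := (Submodule.Quotient.mk_eq_zero K).mp ((hj'p b).symm.trans hc)
    rw [← hj ha]
    exact hip.apply_apply_eq_zero a
  · intro y
    obtain ⟨x, rfl⟩ := K.mkQ_surjective y
    constructor
    · intro hx
      obtain ⟨b, rfl⟩ := (hjq x).mp hx
      exact ⟨p b, hj'p b⟩
    · rintro ⟨c, hc⟩
      obtain ⟨b, rfl⟩ := hp c
      rw [← hc, hj'p]
      exact hjq.apply_apply_eq_zero b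

theorem nonempty_ker_linearEquiv_of_comp_eq {A' B' : Type u} [AddCommGroup A'] [Module R A']
    [AddCommGroup B'] [Module R B']
    {f : A →ₗ[R] B} {g : A' →ₗ[R] B'} {α : A →ₗ[R] A'} {β : B →ₗ[R] B'}
    (hcomm : g ∘ₗ α = β ∘ₗ f) (hα : Function.Bijective α) (hβ : Function.Injective β) :
    Nonempty (LinearMap.ker f ≃ₗ[R] LinearMap.ker g) := by
  refine ⟨(LinearEquiv.ofBijective α hα).ofSubmodules _ _ ?_⟩
  ext y
  obtain ⟨x, rfl⟩ := hα.2 y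
  have hx : g (α x) = β (f x) := LinearMap.congr_fun hcomm x
  simp only [Submodule.mem_map_equiv, LinearEquiv.ofBijective_symm_apply_apply, LinearMap.mem_ker,
    hx]
  exact ⟨fun h => by rw [h, map_zero], fun h => hβ (h.trans (map_zero β).symm)⟩

theorem Function.Exact.prodMap_id {P : Type u} [AddCommGroup P] [Module R P] {f : A →ₗ[R] B}
    {g : B →ₗ[R] C} (hfg : Function.Exact f g) :
    Function.Exact (f.prodMap (LinearMap.id : P →ₗ[R] P)) (g ∘ₗ LinearMap.fst R B P) :=
  fun y => by simpa [Prod.ext_iff] using hfg y.1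

end LinearAlgebra

section Schanuel

variable {X Q₁ Y₁ Q₂ Y₂ : Type u} [AddCommGroup X] [Module R X] [AddCommGroup Q₁] [Module R Q₁]
  [AddCommGroup Y₁] [Module R Y₁] [AddCommGroup Q₂] [Module R Q₂] [AddCommGroup Y₂] [Module R Y₂]

/-- With `e : Q₂ → Q₁` extending `i₁` along `i₂`, the map `(q₁, q₂) ↦ (q₁ - e q₂, p₂ q₂)` is a
cokernel of `(i₁, i₂) : X → Q₁ × Q₂`. -/
theorem nonempty_quotient_range_prod_linearEquiv [Module.Injective R Q₁] (i₁ : X →ₗ[R] Q₁)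
    {i₂ : X →ₗ[R] Q₂} {p₂ : Q₂ →ₗ[R] Y₂} (hi₂ : Function.Injective i₂)
    (hip₂ : Function.Exact i₂ p₂) (hp₂ : Function.Surjective p₂) :
    Nonempty (((Q₁ × Q₂) ⧸ LinearMap.range (i₁.prod i₂)) ≃ₗ[R] Q₁ × Y₂) := by
  obtain ⟨e, he⟩ := Module.Injective.out i₂ hi₂ i₁
  let π : Q₁ × Q₂ →ₗ[R] Q₁ × Y₂ :=
    (LinearMap.fst R Q₁ Q₂ - e ∘ₗ LinearMap.snd R Q₁ Q₂).prod (p₂ ∘ₗ LinearMap.snd R Q₁ Q₂)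
  have hπ : Function.Surjective π := by
    rintro ⟨q, y⟩
    obtain ⟨b, rfl⟩ := hp₂ y
    exact ⟨(q + e b, b), by simp [π]⟩
  have hker : LinearMap.ker π = LinearMap.range (i₁.prod i₂) := by
    ext ⟨q₁, q₂⟩
    simp only [π, LinearMap.mem_ker, LinearMap.mem_range, LinearMap.prod_apply, Function.prod,
      Prod.ext_iff]
    simp only [LinearMap.sub_apply, LinearMap.coe_comp, Function.comp_apply, LinearMap.fst_apply,
      LinearMap.snd_apply, Prod.fst_zero, Prod.snd_zero, sub_eq_zero]
    constructor
    · rintro ⟨h₁, h₂⟩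
      obtain ⟨x, rfl⟩ := (hip₂ q₂).mp h₂
      exact ⟨x, by rw [h₁, he], rfl⟩
    · rintro ⟨x, rfl, rfl⟩
      exact ⟨(he x).symm, hip₂.apply_apply_eq_zero x⟩
  exact ⟨Submodule.quotEquivOfEq _ _ hker.symm ≪≫ₗ π.quotKerEquivOfSurjective hπ⟩

/-- Schanuel's lemma for injective coresolutions. -/
theorem nonempty_prod_linearEquiv_of_exact [Module.Injective R Q₁] [Module.Injective R Q₂]
    {i₁ : X →ₗ[R] Q₁} {p₁ : Q₁ →ₗ[R] Y₁} (hi₁ : Function.Injective i₁)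
    (hip₁ : Function.Exact i₁ p₁) (hp₁ : Function.Surjective p₁)
    {i₂ : X →ₗ[R] Q₂} {p₂ : Q₂ →ₗ[R] Y₂} (hi₂ : Function.Injective i₂)
    (hip₂ : Function.Exact i₂ p₂) (hp₂ : Function.Surjective p₂) :
    Nonempty ((Y₁ × Q₂) ≃ₗ[R] (Y₂ × Q₁)) := by
  obtain ⟨e₁⟩ := nonempty_quotient_range_prod_linearEquiv i₂ hi₁ hip₁ hp₁
  obtain ⟨e₂⟩ := nonempty_quotient_range_prod_linearEquiv i₁ hi₂ hip₂ hp₂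
  have hswap : (LinearMap.range (i₂.prod i₁)).map (LinearEquiv.prodComm R Q₂ Q₁).toLinearMap =
      LinearMap.range (i₁.prod i₂) := by
    rw [← LinearMap.range_comp]
    rfl
  exact ⟨LinearEquiv.prodComm R _ _ ≪≫ₗ e₁.symm ≪≫ₗ
    Submodule.Quotient.equiv _ _ (LinearEquiv.prodComm R Q₂ Q₁) hswap ≪≫ₗ e₂ ≪≫ₗ
    LinearEquiv.prodComm R _ _⟩

end Schanuel

section Horseshoe

variable {A X B QA A' QB B' : Type u} [AddCommGroup A] [Module R A] [AddCommGroup X] [Module R X]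
  [AddCommGroup B] [Module R B] [AddCommGroup QA] [Module R QA] [AddCommGroup A'] [Module R A']
  [AddCommGroup QB] [Module R QB] [AddCommGroup B'] [Module R B']

theorem Function.Exact.injective_prod_comp {iX : A →ₗ[R] X} {pX : X →ₗ[R] B}
    (hiXpX : Function.Exact iX pX) {φ : X →ₗ[R] QA} (hφ : Function.Injective (φ ∘ₗ iX))
    {iB : B →ₗ[R] QB} (hiB : Function.Injective iB) :
    Function.Injective (φ.prod (iB ∘ₗ pX)) := by
  refine (injective_iff_map_eq_zero _).mpr fun x hx => ?_
  obtain ⟨a, rfl⟩ := (hiXpX x).mp (hiB ((congrArg Prod.snd hx).trans (map_zero iB).symm))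
  have ha : (φ ∘ₗ iX) a = (φ ∘ₗ iX) 0 := (congrArg Prod.fst hx).trans (map_zero _).symm
  rw [hφ ha, map_zero]

theorem exists_horseshoe [Module.Injective R QA] {iX : A →ₗ[R] X} {pX : X →ₗ[R] B}
    (hiX : Function.Injective iX) (hiXpX : Function.Exact iX pX) (hpX : Function.Surjective pX)
    {iA : A →ₗ[R] QA} {pA : QA →ₗ[R] A'} (hiA : Function.Injective iA)
    (hiApA : Function.Exact iA pA) (hpA : Function.Surjective pA)
    {iB : B →ₗ[R] QB} {pB : QB →ₗ[R] B'} (hiB : Function.Injective iB)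
    (hiBpB : Function.Exact iB pB) (hpB : Function.Surjective pB) :
    ∃ (m : X →ₗ[R] QA × QB) (jA : A' →ₗ[R] (QA × QB) ⧸ LinearMap.range m)
      (pB' : (QA × QB) ⧸ LinearMap.range m →ₗ[R] B'),
      Function.Injective m ∧ Function.Injective jA ∧ Function.Exact jA pB' ∧
      Function.Surjective pB' := by
  obtain ⟨φ, hφ⟩ := Module.Injective.out iX hiX iA
  set m := φ.prod (iB ∘ₗ pX)
  set K := LinearMap.range m
  have hm (x : X) : m x = (φ x, iB (pX x)) := rfl
  have hmiX (a : A) : m (iX a) = (iA a, 0) := by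
    rw [hm, hφ, hiXpX.apply_apply_eq_zero, map_zero]
  have mem_iX {x : X} (hx : iB (pX x) = 0) : ∃ a, iX a = x :=
    (hiXpX x).mp (hiB (hx.trans (map_zero iB).symm))
  obtain ⟨jA, hjA⟩ := hiApA.exists_comp_eq_of_comp_eq_zero hpA
    (h := K.mkQ ∘ₗ LinearMap.inl R QA QB)
    (LinearMap.ext fun a => (Submodule.Quotient.mk_eq_zero K).mpr ⟨iX a, hmiX a⟩)
  have hjA' (q : QA) : jA (pA q) = K.mkQ (q, 0) := LinearMap.congr_fun hjA q
  have hK : K ≤ LinearMap.ker (pB ∘ₗ LinearMap.snd R QA QB) := by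
    rintro _ ⟨x, rfl⟩
    exact hiBpB.apply_apply_eq_zero (pX x)
  refine ⟨m, jA, K.liftQ _ hK, ?_, ?_, ?_,
    LinearMap.surjective_range_liftQ _ (hpB.comp Prod.snd_surjective)⟩
  · exact hiXpX.injective_prod_comp (by simpa [LinearMap.coe_comp, Function.comp_def, hφ]) hiB
  · refine (injective_iff_map_eq_zero jA).mpr fun a' ha' => ?_
    obtain ⟨q, rfl⟩ := hpA a'
    obtain ⟨x, hx⟩ := (Submodule.Quotient.mk_eq_zero K).mp ((hjA' q).symm.trans ha')
    obtain ⟨a, rfl⟩ := mem_iX (congrArg Prod.snd hx)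
    rw [hmiX, Prod.mk.injEq] at hx
    rw [← hx.1]
    exact hiApA.apply_apply_eq_zero a
  · intro y
    obtain ⟨⟨q₁, q₂⟩, rfl⟩ := K.mkQ_surjective y
    constructor
    · intro hq
      obtain ⟨b, rfl⟩ := (hiBpB q₂).mp hq
      obtain ⟨x, rfl⟩ := hpX b
      refine ⟨pA (q₁ - φ x), (hjA' _).trans ?_⟩
      rw [← sub_eq_zero, ← map_sub, Submodule.mkQ_apply, Submodule.Quotient.mk_eq_zero]
      exact ⟨-x, by simp [hm]⟩
    · rintro ⟨a', ha'⟩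
      obtain ⟨q, rfl⟩ := hpA a'
      rw [← ha', hjA']
      simp

end Horseshoe

theorem extVanish_succ_of_injective (N W : ModuleCat.{u} R) [Module.Injective R W] (n : ℕ) :
    ExtVanish R (n + 1) N W := by
  obtain ⟨P⟩ := (inferInstance : HasProjectiveResolution N).out
  have hP : Function.Exact (P.complex.d (n + 2) (n + 1)).hom (P.complex.d (n + 1) n).hom := by
    have := P.complex_exactAt_succ n
    rwa [HomologicalComplex.exactAt_iff' _ (n + 2) (n + 1) n (by simp) (by simp),
      ShortComplex.ShortExact.moduleCat_exact_iff_function_exact] at this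
  have hzero : Limits.IsZero ((P.complex.linearYonedaObj ℤ W).homology (n + 1)) := by
    rw [← HomologicalComplex.exactAt_iff_isZero_homology,
      HomologicalComplex.exactAt_iff' _ n (n + 1) (n + 2) (by simp) (by simp),
      ShortComplex.moduleCat_exact_iff]
    intro x hx
    obtain ⟨k, hk⟩ := (hP.exact_precomp_of_injective (W := W) x.hom).mp
      (congrArg ModuleCat.Hom.hom hx)
    exact ⟨ModuleCat.ofHom k, ModuleCat.hom_ext hk⟩
  exact ModuleCat.subsingleton_of_isZero (hzero.of_iso (P.isoExt (n + 1) W))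

theorem weakInjective_of_injective (W : ModuleCat.{u} R) [Module.Injective R W] :
    WeakInjective R W :=
  fun N _ => extVanish_succ_of_injective N W 0

section SplitsExtensions

variable {W A B C P X : Type u} [AddCommGroup W] [Module R W] [AddCommGroup A] [Module R A]
  [AddCommGroup B] [Module R B] [AddCommGroup C] [Module R C] [AddCommGroup P] [Module R P]
  [AddCommGroup X] [Module R X]

variable (R) in
/-- An elementary stand-in for `Ext¹_R(W, A) = 0`. -/
def SplitsExtensions (W A : Type u) [AddCommGroup W] [Module R W] [AddCommGroup A]
    [Module R A] : Prop :=
  ∀ (X : Type u) [AddCommGroup X] [Module R X] (i : A →ₗ[R] X) (p : X →ₗ[R] W),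
    Function.Injective i → Function.Exact i p → Function.Surjective p →
    ∃ r : X →ₗ[R] A, r ∘ₗ i = LinearMap.id

theorem splitsExtensions_of_injective [Module.Injective R A] : SplitsExtensions R W A :=
  fun _ _ _ i _ hi _ _ => by
    obtain ⟨r, hr⟩ := Module.Injective.out i hi LinearMap.id
    exact ⟨r, LinearMap.ext hr⟩

theorem SplitsExtensions.of_linearEquiv (h : SplitsExtensions R W A) (e : A ≃ₗ[R] B) :
    SplitsExtensions R W B := by
  intro X _ _ i p hi hip hp
  obtain ⟨r, hr⟩ := h X (i ∘ₗ e.toLinearMap) p (hi.comp e.injective)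
    (LinearEquiv.precomp_exact_iff_exact.mpr hip) hp
  refine ⟨e.toLinearMap ∘ₗ r, LinearMap.ext fun b => ?_⟩
  simpa using congrArg e (LinearMap.congr_fun hr (e.symm b))

/-- Split the pullback of `p` along `g`. -/
theorem SplitsExtensions.exists_comp_eq {Y : Type u} [AddCommGroup Y] [Module R Y]
    (h : SplitsExtensions R W A) {i : A →ₗ[R] X} {p : X →ₗ[R] Y} (hi : Function.Injective i)
    (hip : Function.Exact i p) (hp : Function.Surjective p) (g : W →ₗ[R] Y) :
    ∃ t : W →ₗ[R] X, p ∘ₗ t = g := by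
  let Pb : Submodule R (X × W) :=
    LinearMap.ker (p ∘ₗ LinearMap.fst R X W - g ∘ₗ LinearMap.snd R X W)
  let j : A →ₗ[R] Pb := (LinearMap.inl R X W ∘ₗ i).codRestrict Pb fun a => by
    simp [Pb, hip.apply_apply_eq_zero]
  let q : Pb →ₗ[R] W := LinearMap.snd R X W ∘ₗ Pb.subtype
  have hj : Function.Injective j := fun a b hab => hi (congrArg (fun z => z.1.1) hab)
  have hjq : Function.Exact j q := by
    rintro ⟨⟨x, w⟩, hxw⟩
    simp only [Pb, LinearMap.mem_ker, LinearMap.sub_apply, LinearMap.comp_apply,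
      LinearMap.fst_apply, LinearMap.snd_apply, sub_eq_zero] at hxw
    constructor
    · rintro (rfl : w = 0)
      obtain ⟨a, rfl⟩ := (hip x).mp (by simpa using hxw)
      exact ⟨a, rfl⟩
    · rintro ⟨a, ha⟩
      simp only [q, ← ha, j]
      rfl
  have hq : Function.Surjective q := fun w => by
    obtain ⟨x, hx⟩ := hp (g w)
    exact ⟨⟨(x, w), by simp [Pb, hx]⟩, rfl⟩
  obtain ⟨r, hr⟩ := h Pb j q hj hjq hq
  have hsplit := (hjq.split_tfae hj hq).out 1 0
  obtain ⟨s, hs⟩ := hsplit.mp ⟨r, hr⟩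
  refine ⟨LinearMap.fst R X W ∘ₗ Pb.subtype ∘ₗ s, LinearMap.ext fun w => ?_⟩
  have hsw : (s w : X × W).2 = w := LinearMap.congr_fun hs w
  have hmem := (s w).2
  simp only [Pb, LinearMap.mem_ker, LinearMap.sub_apply, LinearMap.comp_apply,
    LinearMap.fst_apply, LinearMap.snd_apply, sub_eq_zero, hsw] at hmem
  simpa using hmem

/-- Split `W → X ⧸ A` through the extension `0 → C → X ⧸ A → W → 0`, then lift it to `X`. -/
theorem SplitsExtensions.of_exact (hA : SplitsExtensions R W A) (hC : SplitsExtensions R W C)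
    {i : A →ₗ[R] B} {p : B →ₗ[R] C} (hi : Function.Injective i) (hip : Function.Exact i p)
    (hp : Function.Surjective p) : SplitsExtensions R W B := by
  intro X _ _ j q hj hjq hq
  obtain ⟨j', q', hj', hj'q', hq', hq'q⟩ := exists_exact_quotient_range_comp hip hp hj hjq hq
  obtain ⟨r', hr'⟩ := hC _ j' q' hj' hj'q' hq'
  have hsplit' := (hj'q'.split_tfae hj' hq').out 1 0
  obtain ⟨s', hs'⟩ := hsplit'.mp ⟨r', hr'⟩
  obtain ⟨t, ht⟩ := hA.exists_comp_eq (hj.comp hi) (LinearMap.exact_map_mkQ_range _)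
    (Submodule.mkQ_surjective _) s'
  have hsplit := (hjq.split_tfae hj hq).out 0 1
  refine hsplit.mp ⟨t, ?_⟩
  rw [← hq'q, LinearMap.comp_assoc, ht, hs']

theorem SplitsExtensions.prod (hA : SplitsExtensions R W A) (hB : SplitsExtensions R W B) :
    SplitsExtensions R W (A × B) :=
  hA.of_exact hB LinearMap.inl_injective Function.Exact.inl_snd LinearMap.snd_surjective

theorem SplitsExtensions.of_prod (h : SplitsExtensions R W (A × P)) :
    SplitsExtensions R W A := by
  intro X _ _ i p hi hip hp
  obtain ⟨r, hr⟩ := h (X × P) (i.prodMap LinearMap.id) (p ∘ₗ LinearMap.fst R X P)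
    (Prod.map_injective.mpr ⟨hi, Function.injective_id⟩) hip.prodMap_id
    (hp.comp Prod.fst_surjective)
  refine ⟨LinearMap.fst R A P ∘ₗ r ∘ₗ LinearMap.inl R X P, LinearMap.ext fun a => ?_⟩
  simpa using congrArg Prod.fst (LinearMap.congr_fun hr (a, 0))

end SplitsExtensions

variable (R) in
/-- `Z ∈ 𝒲ℐ^⊥`: `Ext¹_R(W, Z) = 0` for all weak injective `W`. -/
def WIPerp (Z : ModuleCat.{u} R) : Prop :=
  ∀ W : ModuleCat.{u} R, WeakInjective R W → SplitsExtensions R W Z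

namespace IsTotallyAcyclicInjComplex

variable {𝒯 : ModuleCat.{u} R → Prop} {T : ℤ → ModuleCat.{u} R}
  {d : ∀ n : ℤ, T n →ₗ[R] T (n + 1)}

/-- Extend `A → Z^c ⊆ T^c` to `φ : X → T^c`; then `d ∘ φ` descends to a cycle `W → T^{c+1}`,
which is `d ∘ h` by exactness of `Hom(W, T)`, and `φ - h ∘ p` lands in `Z^c`. -/
theorem exists_comp_eq_of_exact_hom (hT : IsTotallyAcyclicInjComplex R 𝒯 T d) {c : ℤ}
    {W : ModuleCat.{u} R} (hW : Function.Exact (fun g : W →ₗ[R] T c => d c ∘ₗ g)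
      (fun g : W →ₗ[R] T (c + 1) => d (c + 1) ∘ₗ g))
    {A X : Type u} [AddCommGroup A] [Module R A] [AddCommGroup X] [Module R X]
    {i : A →ₗ[R] X} {p : X →ₗ[R] W} (hi : Function.Injective i) (hip : Function.Exact i p)
    (hp : Function.Surjective p) (g : A →ₗ[R] LinearMap.ker (d c)) :
    ∃ g' : X →ₗ[R] LinearMap.ker (d c), g' ∘ₗ i = g := by
  have := hT.1 c
  obtain ⟨φ, hφ⟩ := Module.Injective.out i hi ((LinearMap.ker (d c)).subtype ∘ₗ g)
  obtain ⟨ψ, hψ⟩ := hip.exists_comp_eq_of_comp_eq_zero hp (h := d c ∘ₗ φ)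
    (LinearMap.ext fun a => by simp [hφ])
  have hψ_cycle : d (c + 1) ∘ₗ ψ = 0 := by
    refine LinearMap.ext fun w => ?_
    obtain ⟨x, rfl⟩ := hp w
    rw [LinearMap.comp_apply, LinearMap.zero_apply,
      show ψ (p x) = d c (φ x) from LinearMap.congr_fun hψ x]
    exact (hT.2.1 c).apply_apply_eq_zero (φ x)
  obtain ⟨h, hh⟩ := (hW ψ).mp hψ_cycle
  have hmem (x : X) : (φ - h ∘ₗ p) x ∈ LinearMap.ker (d c) := by
    have := LinearMap.congr_fun hh (p x)
    simp only [LinearMap.comp_apply] at this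
    simp [this, ← LinearMap.comp_apply (f := ψ), hψ]
  refine ⟨(φ - h ∘ₗ p).codRestrict _ hmem, LinearMap.ext fun a => Subtype.ext ?_⟩
  simp [hφ, hip.apply_apply_eq_zero]

theorem splitsExtensions_ker (hT : IsTotallyAcyclicInjComplex R 𝒯 T d) {W : ModuleCat.{u} R}
    (hW : 𝒯 W) (c : ℤ) : SplitsExtensions R W (LinearMap.ker (d c)) :=
  fun _ _ _ _ _ hi hip hp => hT.exists_comp_eq_of_exact_hom (hT.2.2 W hW c) hi hip hp _

theorem injective_ker_of_extHatVanishesAll_quotient (hT : IsTotallyAcyclicInjComplex R 𝒯 T d)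
    (h : ∀ I : Submodule R R, ExtHatVanishesAll R (ModuleCat.of R (R ⧸ I)) T d) (c : ℤ) :
    Module.Injective R (LinearMap.ker (d c)) := by
  refine Module.Baer.injective fun I g => ?_
  obtain ⟨g', hg'⟩ := hT.exists_comp_eq_of_exact_hom (h I c) Subtype.val_injective
    (LinearMap.exact_subtype_mkQ I) I.mkQ_surjective g
  exact ⟨g', fun x hx => LinearMap.congr_fun hg' ⟨x, hx⟩⟩

theorem extHatVanishesAll_of_injective_ker (hT : IsTotallyAcyclicInjComplex R 𝒯 T d)
    (h : ∀ c, Module.Injective R (LinearMap.ker (d c))) (N : ModuleCat.{u} R) :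
    ExtHatVanishesAll R N T d := by
  intro c g
  have hd := hT.2.1 c
  have := h c
  obtain ⟨s, hs⟩ := hd.exact_subtype_toKer.exists_comp_eq_id_of_injective
    Subtype.val_injective hd.toKer_surjective
  constructor
  · intro hg
    refine ⟨s ∘ₗ g.codRestrict _ fun x => LinearMap.congr_fun hg x, LinearMap.ext fun x => ?_⟩
    exact congrArg Subtype.val (LinearMap.congr_fun hs _)
  · rintro ⟨k, rfl⟩
    exact LinearMap.ext fun x => hd.apply_apply_eq_zero (k x)

theorem injective_ker_succ (hT : IsTotallyAcyclicInjComplex R 𝒯 T d) {c : ℤ}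
    [Module.Injective R (LinearMap.ker (d c))] :
    Module.Injective R (LinearMap.ker (d (c + 1))) := by
  have := hT.1 c
  obtain ⟨s, hs⟩ := (hT.2.1 c).exact_subtype_toKer.exists_comp_eq_id_of_injective
    Subtype.val_injective (hT.2.1 c).toKer_surjective
  exact .of_comp_eq_id s (hT.2.1 c).toKer hs

theorem injective_ker_of_injective_ker_succ
    (hT : IsTotallyAcyclicInjComplex R (WeakInjective R) T d) {c : ℤ}
    [Module.Injective R (LinearMap.ker (d (c + 1)))] :
    Module.Injective R (LinearMap.ker (d c)) := by
  have := hT.1 c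
  obtain ⟨r, hr⟩ := hT.splitsExtensions_ker
    (weakInjective_of_injective (ModuleCat.of R (LinearMap.ker (d (c + 1))))) c
    _ _ _ Subtype.val_injective (hT.2.1 c).exact_subtype_toKer (hT.2.1 c).toKer_surjective
  exact .of_comp_eq_id _ r hr

theorem injective_ker_of_injective_ker (hT : IsTotallyAcyclicInjComplex R (WeakInjective R) T d)
    {m : ℤ} [Module.Injective R (LinearMap.ker (d m))] (c : ℤ) :
    Module.Injective R (LinearMap.ker (d c)) := by
  induction c using Int.inductionOn' (b := m) with
  | zero => infer_instance
  | succ k _ ih => exact hT.injective_ker_succ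
  | pred k _ ih =>
    have : Module.Injective R (LinearMap.ker (d (k - 1 + 1))) := by rwa [sub_add_cancel]
    exact hT.injective_ker_of_injective_ker_succ

end IsTotallyAcyclicInjComplex

theorem GorensteinRelInjective.exists_linearEquiv_ker {𝒯 : ModuleCat.{u} R → Prop}
    {G : ModuleCat.{u} R} (hG : GorensteinRelInjective R 𝒯 G) :
    ∃ (I : ℤ → ModuleCat.{u} R) (d : ∀ n : ℤ, I n →ₗ[R] I (n + 1)),
      IsTotallyAcyclicInjComplex R 𝒯 I d ∧ Nonempty (G ≃ₗ[R] LinearMap.ker (d 1)) := by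
  obtain ⟨I, d, π, hI, hπ, hexπ⟩ := hG
  have hd := hI.2.1 0
  have hker : LinearMap.ker π = LinearMap.ker hd.toKer := by
    rw [hexπ.linearMap_ker_eq, Function.Exact.toKer, LinearMap.ker_codRestrict]
    exact (hI.2.1 (-1)).linearMap_ker_eq.symm
  exact ⟨I, d, hI, ⟨(π.quotKerEquivOfSurjective hπ).symm ≪≫ₗ Submodule.quotEquivOfEq _ _ hker ≪≫ₗ
    hd.toKer.quotKerEquivOfSurjective hd.toKer_surjective⟩⟩

section Cosyzygies

variable (R) in
def InjCosyzygy : ℕ → ModuleCat.{u} R → ModuleCat.{u} R → Prop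
  | 0, X, Z => Nonempty (X ≃ₗ[R] Z)
  | d + 1, X, Z => ∃ (Q Y : ModuleCat.{u} R) (i : X →ₗ[R] Q) (p : Q →ₗ[R] Y),
      Module.Injective R Q ∧ Function.Injective i ∧ Function.Exact i p ∧
      Function.Surjective p ∧ InjCosyzygy d Y Z

theorem InjCosyzygy.snoc {d : ℕ} {X Y Q Z : ModuleCat.{u} R} (h : InjCosyzygy R d X Y)
    [Module.Injective R Q] {i : Y →ₗ[R] Q} {p : Q →ₗ[R] Z} (hi : Function.Injective i)
    (hip : Function.Exact i p) (hp : Function.Surjective p) : InjCosyzygy R (d + 1) X Z := by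
  induction d generalizing X with
  | zero =>
    obtain ⟨f⟩ := h
    exact ⟨Q, Z, i ∘ₗ f.toLinearMap, p, inferInstance, hi.comp f.injective,
      LinearEquiv.precomp_exact_iff_exact.mpr hip, hp, ⟨LinearEquiv.refl R Z⟩⟩
  | succ d ih =>
    obtain ⟨Q₀, Y₀, i₀, p₀, hQ₀, hi₀, hip₀, hp₀, h⟩ := h
    exact ⟨Q₀, Y₀, i₀, p₀, hQ₀, hi₀, hip₀, hp₀, ih h⟩

theorem injCosyzygy_ker {M : ModuleCat.{u} R} {G : ℕ → ModuleCat.{u} R}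
    {d : ∀ i, G i →ₗ[R] G (i + 1)} {ε : M →ₗ[R] G 0} (hε : Function.Injective ε)
    (hεd : Function.Exact ε (d 0)) (hd : ∀ i, Function.Exact (d i) (d (i + 1)))
    (hG : ∀ i, Module.Injective R (G i)) (k : ℕ) :
    InjCosyzygy R k M (ModuleCat.of R (LinearMap.ker (d k))) := by
  induction k with
  | zero =>
    exact ⟨LinearEquiv.ofInjective ε hε ≪≫ₗ LinearEquiv.ofEq _ _ hεd.linearMap_ker_eq.symm⟩
  | succ k ih =>
    have := hG k
    exact ih.snoc Subtype.val_injective (hd k).exact_subtype_toKer (hd k).toKer_surjective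

variable (R) in
def InjStablyIso (X Y : ModuleCat.{u} R) : Prop :=
  ∃ P Q : ModuleCat.{u} R, Module.Injective R P ∧ Module.Injective R Q ∧
    Nonempty ((X × P) ≃ₗ[R] (Y × Q))

theorem InjStablyIso.refl (X : ModuleCat.{u} R) : InjStablyIso R X X :=
  ⟨ModuleCat.of R PUnit, ModuleCat.of R PUnit, .of_subsingleton, .of_subsingleton,
    ⟨LinearEquiv.refl R _⟩⟩

theorem InjStablyIso.splitsExtensions {X Y : ModuleCat.{u} R} (h : InjStablyIso R X Y)
    {W : Type u} [AddCommGroup W] [Module R W] (hX : SplitsExtensions R W X) :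
    SplitsExtensions R W Y := by
  obtain ⟨P, Q, hP, hQ, ⟨e⟩⟩ := h
  exact (hX.prod splitsExtensions_of_injective).of_linearEquiv e |>.of_prod

theorem InjStablyIso.injective {X Y : ModuleCat.{u} R} (h : InjStablyIso R X Y)
    [Module.Injective R X] : Module.Injective R Y := by
  obtain ⟨P, Q, hP, hQ, ⟨e⟩⟩ := h
  exact .of_comp_eq_id (e.symm.toLinearMap ∘ₗ LinearMap.inl R Y Q)
    (LinearMap.fst R Y Q ∘ₗ e.toLinearMap) (by ext; simp)

theorem InjCosyzygy.injStablyIso {d : ℕ} {X₁ X₂ Z₁ Z₂ : ModuleCat.{u} R}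
    (hX : InjStablyIso R X₁ X₂) (h₁ : InjCosyzygy R d X₁ Z₁) (h₂ : InjCosyzygy R d X₂ Z₂) :
    InjStablyIso R Z₁ Z₂ := by
  induction d generalizing X₁ X₂ with
  | zero =>
    obtain ⟨P₁, P₂, hP₁, hP₂, ⟨e⟩⟩ := hX
    obtain ⟨f₁⟩ := h₁
    obtain ⟨f₂⟩ := h₂
    exact ⟨P₁, P₂, hP₁, hP₂,
      ⟨f₁.symm.prodCongr (LinearEquiv.refl R _) ≪≫ₗ e ≪≫ₗ f₂.prodCongr (LinearEquiv.refl R _)⟩⟩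
  | succ d ih =>
    obtain ⟨P₁, P₂, hP₁, hP₂, ⟨e⟩⟩ := hX
    obtain ⟨Q₁, Y₁, i₁, p₁, hQ₁, hi₁, hip₁, hp₁, h₁⟩ := h₁
    obtain ⟨Q₂, Y₂, i₂, p₂, hQ₂, hi₂, hip₂, hp₂, h₂⟩ := h₂
    -- `X₁ × P₁ ≅ X₂ × P₂` embeds into `Q₁ × P₁` and into `Q₂ × P₂` with cokernels `Y₁` and `Y₂`
    obtain ⟨f⟩ := nonempty_prod_linearEquiv_of_exact
      (i₁ := i₁.prodMap LinearMap.id) (p₁ := p₁ ∘ₗ LinearMap.fst R Q₁ P₁)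
      (i₂ := i₂.prodMap LinearMap.id ∘ₗ e.toLinearMap) (p₂ := p₂ ∘ₗ LinearMap.fst R Q₂ P₂)
      (Prod.map_injective.mpr ⟨hi₁, Function.injective_id⟩) hip₁.prodMap_id
      (hp₁.comp Prod.fst_surjective)
      ((Prod.map_injective.mpr ⟨hi₂, Function.injective_id⟩).comp e.injective)
      (LinearEquiv.precomp_exact_iff_exact.mpr hip₂.prodMap_id) (hp₂.comp Prod.fst_surjective)
    exact ih ⟨ModuleCat.of R (Q₂ × P₂), ModuleCat.of R (Q₁ × P₁), Module.Injective.prod,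
      Module.Injective.prod, ⟨f⟩⟩ h₁ h₂

end Cosyzygies

variable (R) in
/-- Stands for `Ext^{d+1}_R(W, X) = 0` for all weak injective `W`; by Schanuel's lemma every
`d`-th injective cosyzygy of `X` then lies in `𝒲ℐ^⊥` (`HasWIPerpCosyzygy.wiPerp`). -/
def HasWIPerpCosyzygy (d : ℕ) (X : ModuleCat.{u} R) : Prop :=
  ∃ Z : ModuleCat.{u} R, InjCosyzygy R d X Z ∧ WIPerp R Z

namespace HasWIPerpCosyzygy

variable {d : ℕ}

theorem wiPerp {X Z : ModuleCat.{u} R} (h : HasWIPerpCosyzygy R d X) (hZ : InjCosyzygy R d X Z) :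
    WIPerp R Z := by
  obtain ⟨Z', hZ', hWZ'⟩ := h
  exact fun W hW => (hZ'.injStablyIso (.refl X) hZ).splitsExtensions (hWZ' W hW)

theorem wiPerp_zero {X : ModuleCat.{u} R} (h : HasWIPerpCosyzygy R 0 X) : WIPerp R X :=
  h.wiPerp ⟨LinearEquiv.refl R X⟩

theorem cons {X Q Y : ModuleCat.{u} R} [Module.Injective R Q] {i : X →ₗ[R] Q}
    {p : Q →ₗ[R] Y} (hi : Function.Injective i) (hip : Function.Exact i p)
    (hp : Function.Surjective p) (h : HasWIPerpCosyzygy R d Y) :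
    HasWIPerpCosyzygy R (d + 1) X :=
  let ⟨Z, hZ, hWZ⟩ := h
  ⟨Z, ⟨Q, Y, i, p, inferInstance, hi, hip, hp, hZ⟩, hWZ⟩

theorem of_exact {A X B : ModuleCat.{u} R} {i : A →ₗ[R] X}
    {p : X →ₗ[R] B} (hi : Function.Injective i) (hip : Function.Exact i p)
    (hp : Function.Surjective p) (hA : HasWIPerpCosyzygy R d A)
    (hB : HasWIPerpCosyzygy R d B) : HasWIPerpCosyzygy R d X := by
  induction d generalizing A X B with
  | zero =>
    exact ⟨X, ⟨LinearEquiv.refl R X⟩, fun W hW =>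
      (hA.wiPerp_zero W hW).of_exact (hB.wiPerp_zero W hW) hi hip hp⟩
  | succ d ih =>
    obtain ⟨ZA, ⟨QA, A', iA, pA, hQA, hiA, hiApA, hpA, hA'⟩, hZA⟩ := hA
    obtain ⟨ZB, ⟨QB, B', iB, pB, hQB, hiB, hiBpB, hpB, hB'⟩, hZB⟩ := hB
    obtain ⟨m, jA, pB', hm, hjA, hjApB', hpB'⟩ :=
      exists_horseshoe hi hip hp hiA hiApA hpA hiB hiBpB hpB
    have hX' : HasWIPerpCosyzygy R d (ModuleCat.of R (_ ⧸ LinearMap.range m)) :=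
      ih hjA hjApB' hpB' ⟨ZA, hA', hZA⟩ ⟨ZB, hB', hZB⟩
    exact hX'.cons (Q := ModuleCat.of R (QA × QB)) hm (LinearMap.exact_map_mkQ_range m)
      (Submodule.mkQ_surjective _)

end HasWIPerpCosyzygy

theorem IsTotallyAcyclicInjComplex.hasWIPerpCosyzygy_ker {T : ℤ → ModuleCat.{u} R}
    {d : ∀ n : ℤ, T n →ₗ[R] T (n + 1)} (hT : IsTotallyAcyclicInjComplex R (WeakInjective R) T d)
    (k : ℕ) (c : ℤ) : HasWIPerpCosyzygy R k (ModuleCat.of R (LinearMap.ker (d c))) := by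
  induction k generalizing c with
  | zero => exact ⟨_, ⟨LinearEquiv.refl R _⟩, fun W hW => hT.splitsExtensions_ker hW c⟩
  | succ k ih =>
    have := hT.1 c
    exact (ih (c + 1)).cons Subtype.val_injective (hT.2.1 c).exact_subtype_toKer
      (hT.2.1 c).toKer_surjective

theorem IsFiniteCoresolution.tail {M : ModuleCat.{u} R} {n : ℕ} {G : ℕ → ModuleCat.{u} R}
    {d : ∀ i, G i →ₗ[R] G (i + 1)} {ε : M →ₗ[R] G 0}
    (h : IsFiniteCoresolution R M (n + 1) G d ε) :
    IsFiniteCoresolution R (ModuleCat.of R (LinearMap.ker (d 1))) n (fun i => G (i + 1))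
      (fun i => d (i + 1)) (LinearMap.ker (d 1)).subtype :=
  ⟨Subtype.val_injective, LinearMap.exact_subtype_ker_map _, fun i => h.2.2.1 (i + 1),
    fun i hi => h.2.2.2 (i + 1) (by omega)⟩

/-- Compose `M → G⁰` with `G⁰ ≅ Z¹ ⊆ I¹`, for `G⁰` a cycle of a `WI`-pure complex `I`: the cokernel
is an extension of `Z²` by `ker d¹`, and both have `WIPerp` cosyzygies in degree `n`. -/
theorem GwidLE.hasWIPerpCosyzygy {M : ModuleCat.{u} R} {n : ℕ} (h : GwidLE R M n) :
    HasWIPerpCosyzygy R n M := by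
  induction n generalizing M with
  | zero =>
    obtain ⟨G, d, ε, ⟨hε, hεd, -, hG0⟩, hG⟩ := h
    obtain ⟨I, dI, hI, ⟨e⟩⟩ := (hG 0).exists_linearEquiv_ker
    have hε' : Function.Surjective ε := fun g => (hεd g).mp (hG0 1 one_pos _)
    exact ⟨_, ⟨LinearEquiv.ofBijective ε ⟨hε, hε'⟩ ≪≫ₗ e⟩,
      (hI.hasWIPerpCosyzygy_ker 0 1).wiPerp_zero⟩
  | succ n ih =>
    obtain ⟨G, d, ε, hres, hG⟩ := h
    have hC : HasWIPerpCosyzygy R n (ModuleCat.of R (LinearMap.ker (d 1))) :=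
      ih ⟨_, _, _, hres.tail, fun i => hG (i + 1)⟩
    obtain ⟨hε, hεd, hd, -⟩ := hres
    obtain ⟨I, dI, hI, ⟨e⟩⟩ := (hG 0).exists_linearEquiv_ker
    have := hI.1 1
    have hj : Function.Exact ((LinearMap.ker (dI 1)).subtype ∘ₗ e.toLinearMap) (dI 1) :=
      LinearEquiv.precomp_exact_iff_exact.mpr (LinearMap.exact_subtype_ker_map _)
    obtain ⟨j', q', hj', hj'q', hq', -⟩ := exists_exact_quotient_range_comp
      (hεd.exact_toKer (hd 0)) (hd 0).toKer_surjective
      (Subtype.val_injective.comp e.injective) (hj.exact_toKer (hI.2.1 1))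
      (hI.2.1 1).toKer_surjective
    have hX : HasWIPerpCosyzygy R n (ModuleCat.of R (_ ⧸ LinearMap.range
        ((LinearMap.ker (dI 1)).subtype ∘ₗ e.toLinearMap ∘ₗ ε))) :=
      .of_exact hj' hj'q' hq' hC (hI.hasWIPerpCosyzygy_ker n (1 + 1))
    exact hX.cons (Q := I 1) ((Subtype.val_injective.comp e.injective).comp hε)
      (LinearMap.exact_map_mkQ_range _) (Submodule.mkQ_surjective _)

theorem injective_ker_of_hasWIPerpCosyzygy {M : ModuleCat.{u} R} {G : ℕ → ModuleCat.{u} R}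
    {d : ∀ i, G i →ₗ[R] G (i + 1)} {ε : M →ₗ[R] G 0} (hε : Function.Injective ε)
    (hεd : Function.Exact ε (d 0)) (hd : ∀ i, Function.Exact (d i) (d (i + 1)))
    (hG : ∀ i, Module.Injective R (G i)) {k : ℕ} (hM : HasWIPerpCosyzygy R k M)
    [Module.Injective R (LinearMap.ker (d (k + 1)))] :
    Module.Injective R (LinearMap.ker (d k)) := by
  have := hG k
  obtain ⟨r, hr⟩ := hM.wiPerp (injCosyzygy_ker hε hεd hd hG k) _
    (weakInjective_of_injective (ModuleCat.of R (LinearMap.ker (d (k + 1)))))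
    _ _ _ Subtype.val_injective (hd k).exact_subtype_toKer (hd k).toKer_surjective
  exact .of_comp_eq_id _ r hr

section Dimensions

theorem sInf_natCast_le_iff_of_monotone {P : ℕ → Prop} (hP : Monotone P) {n : ℕ} :
    sInf {c : ℕ∞ | ∃ k : ℕ, c = k ∧ P k} ≤ n ↔ P n := by
  refine ⟨fun h => ?_, fun h => sInf_le ⟨n, rfl, h⟩⟩
  have hne : {c : ℕ∞ | ∃ k : ℕ, c = k ∧ P k}.Nonempty := by
    by_contra hemp
    rw [Set.not_nonempty_iff_eq_empty.mp hemp, sInf_empty, top_le_iff] at h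
    exact ENat.natCast_ne_top n h
  obtain ⟨k, hk, hPk⟩ := csInf_mem hne
  exact hP (by exact_mod_cast hk ▸ h) hPk

variable {M : ModuleCat.{u} R} {G : ℕ → ModuleCat.{u} R} {d : ∀ i, G i →ₗ[R] G (i + 1)}
  {ε : M →ₗ[R] G 0}

theorem IsFiniteCoresolution.mono {k n : ℕ} (h : IsFiniteCoresolution R M k G d ε)
    (hkn : k ≤ n) : IsFiniteCoresolution R M n G d ε :=
  ⟨h.1, h.2.1, h.2.2.1, fun i hi => h.2.2.2 i (by omega)⟩

theorem idLE_monotone : Monotone (IdLE R M) :=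
  fun _ _ hkn ⟨G, d, ε, h, hG⟩ => ⟨G, d, ε, h.mono hkn, hG⟩

theorem gwidLE_monotone : Monotone (GwidLE R M) :=
  fun _ _ hkn ⟨G, d, ε, h, hG⟩ => ⟨G, d, ε, h.mono hkn, hG⟩

theorem idLE_zero_of_injective [Module.Injective R M] : IdLE R M 0 := by
  refine ⟨fun | 0 => M | _ + 1 => ModuleCat.of R PUnit, fun _ => 0, LinearMap.id,
    ⟨Function.injective_id, fun _ => ?_, fun _ _ => ?_, fun | i + 1, _ => fun _ => rfl⟩,
    fun | 0 => inferInstance | _ + 1 => Module.Injective.of_subsingleton⟩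
  · exact ⟨fun _ => ⟨_, rfl⟩, fun _ => rfl⟩
  · exact ⟨fun _ => ⟨0, rfl⟩, fun _ => rfl⟩

theorem IdLE.cons {X Q Y : ModuleCat.{u} R} [Module.Injective R Q] {n : ℕ} {i : X →ₗ[R] Q}
    {p : Q →ₗ[R] Y} (hi : Function.Injective i) (hip : Function.Exact i p)
    (hp : Function.Surjective p) (h : IdLE R Y n) : IdLE R X (n + 1) := by
  obtain ⟨G, d, ε, ⟨hε, hεd, hd, hG0⟩, hG⟩ := h
  refine ⟨fun | 0 => Q | k + 1 => G k, fun | 0 => ε ∘ₗ p | k + 1 => d k, i,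
    ⟨hi, ?_, fun | 0 => ?_ | k + 1 => hd k, fun | k + 1, hk => hG0 k (by omega)⟩,
    fun | 0 => inferInstance | k + 1 => hG k⟩
  · exact (Function.Injective.comp_exact_iff_exact hε).mpr hip
  · exact (Function.Surjective.comp_exact_iff_exact hp).mpr hεd

theorem IdLE.of_injCosyzygy {n : ℕ} {X Z : ModuleCat.{u} R} (h : InjCosyzygy R n X Z)
    [Module.Injective R Z] : IdLE R X n := by
  induction n generalizing X with
  | zero =>
    obtain ⟨e⟩ := h
    have := Module.Injective.of_linearEquiv e.symm
    exact idLE_zero_of_injective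
  | succ n ih =>
    obtain ⟨Q, Y, i, p, hQ, hi, hip, hp, h⟩ := h
    exact (ih h).cons hi hip hp

end Dimensions

namespace WIPureTateInjectiveResolution

variable {M : ModuleCat.{u} R} {E : ℕ → ModuleCat.{u} R} {dE : ∀ m, E m →ₗ[R] E (m + 1)}
  {ε : M →ₗ[R] E 0} {T : ℤ → ModuleCat.{u} R} {dT : ∀ m : ℤ, T m →ₗ[R] T (m + 1)}
  {u : ∀ m : ℕ, E m →ₗ[R] T m}

theorem exists_ker_linearEquiv (hTate : WIPureTateInjectiveResolution R M E dE ε T dT u) :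
    ∃ N₀ : ℕ, ∀ k, N₀ ≤ k → Nonempty (LinearMap.ker (dE k) ≃ₗ[R] LinearMap.ker (dT k)) := by
  obtain ⟨-, -, -, -, -, hcomm, N₀, hu⟩ := hTate
  exact ⟨N₀, fun k hk => nonempty_ker_linearEquiv_of_comp_eq (hcomm k) (hu k hk)
    (hu (k + 1) (by omega)).1⟩

/-- By Schanuel's lemma, `id_R M ≤ n` makes the `m`-th cosyzygy of `E` injective for `m > n`;
for `m` large it is also a cycle of `T`. -/
theorem injective_ker_of_idLE (hTate : WIPureTateInjectiveResolution R M E dE ε T dT u)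
    {n : ℕ} (h : IdLE R M n) (c : ℤ) : Module.Injective R (LinearMap.ker (dT c)) := by
  obtain ⟨N₀, hN₀⟩ := hTate.exists_ker_linearEquiv
  obtain ⟨hE, hε, hεd, hdE, hT, -⟩ := hTate
  obtain ⟨G, dG, εG, ⟨hεG, hεGd, hdG, hG0⟩, hG⟩ := h
  set m := max (n + 1) N₀
  have : Subsingleton (LinearMap.ker (dG m)) :=
    ⟨fun x y => Subtype.ext ((hG0 m (by omega) x).trans (hG0 m (by omega) y).symm)⟩
  have : Module.Injective R (LinearMap.ker (dG m)) := .of_subsingleton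
  have : Module.Injective R (LinearMap.ker (dE m)) := InjStablyIso.injective
    ((injCosyzygy_ker hεG hεGd hdG hG m).injStablyIso (.refl M)
      (injCosyzygy_ker hε hεd hdE hE m))
  obtain ⟨e⟩ := hN₀ m (le_max_right _ _)
  have := Module.Injective.of_linearEquiv e
  exact hT.injective_ker_of_injective_ker (m := m) c

theorem idLE_of_injective_ker (hTate : WIPureTateInjectiveResolution R M E dE ε T dT u)
    {n : ℕ} (hM : GwidLE R M n) (h : ∀ c, Module.Injective R (LinearMap.ker (dT c))) :
    IdLE R M n := by
  obtain ⟨N₀, hN₀⟩ := hTate.exists_ker_linearEquiv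
  obtain ⟨hE, hε, hεd, hdE, -⟩ := hTate
  obtain ⟨e⟩ := hN₀ (max n N₀) (le_max_right _ _)
  have hmax : Module.Injective R (LinearMap.ker (dE (max n N₀))) := .of_linearEquiv e.symm
  have : Module.Injective R (LinearMap.ker (dE n)) :=
    Nat.decreasingInduction
      (motive := fun k _ => n ≤ k → Module.Injective R (LinearMap.ker (dE k)))
      (fun k _ ih hnk =>
        have := ih (by omega)
        injective_ker_of_hasWIPerpCosyzygy hε hεd hdE hE (gwidLE_monotone hnk hM).hasWIPerpCosyzygy)
      (fun _ => hmax) (le_max_left n N₀) le_rfl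
  exact .of_injCosyzygy (injCosyzygy_ker hε hεd hdE hE n)

end WIPureTateInjectiveResolution

/-- Let `M` have `Gwid_R M = n < ∞` and a `WI`-pure Tate injective resolution
`M → E → T`. Then `id_R M ≤ n` iff `Êxt^i_GWI(N, M) = 0` for every module `N` and
every `i ∈ ℤ`, iff `Êxt^i_GWI(R/I, M) = 0` for every left ideal `I` and every `i ∈ ℤ`. -/
theorem idim_le_iff_extHat_vanishes (M : ModuleCat.{u} R) (n : ℕ)
    (E : ℕ → ModuleCat.{u} R) (dE : ∀ m, E m →ₗ[R] E (m + 1)) (ε : M →ₗ[R] E 0)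
    (T : ℤ → ModuleCat.{u} R) (dT : ∀ m : ℤ, T m →ₗ[R] T (m + 1))
    (u : ∀ m : ℕ, E m →ₗ[R] T m)
    (hTate : WIPureTateInjectiveResolution R M E dE ε T dT u)
    (hGwid : Gwid R M = (n : ℕ∞)) :
    (Idim R M ≤ (n : ℕ∞) ↔ ∀ N : ModuleCat.{u} R, ExtHatVanishesAll R N T dT) ∧
    ((∀ N : ModuleCat.{u} R, ExtHatVanishesAll R N T dT) ↔
      ∀ I : Submodule R R, ExtHatVanishesAll R (ModuleCat.of R (R ⧸ I)) T dT) := by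
  have hT : IsTotallyAcyclicInjComplex R (WeakInjective R) T dT := hTate.2.2.2.2.1
  have hM : GwidLE R M n := (sInf_natCast_le_iff_of_monotone gwidLE_monotone).mp hGwid.le
  have hidim : Idim R M ≤ n ↔ ∀ c, Module.Injective R (LinearMap.ker (dT c)) :=
    (sInf_natCast_le_iff_of_monotone idLE_monotone).trans
      ⟨hTate.injective_ker_of_idLE, hTate.idLE_of_injective_ker hM⟩
  have hall : (∀ N : ModuleCat.{u} R, ExtHatVanishesAll R N T dT) ↔
      ∀ c, Module.Injective R (LinearMap.ker (dT c)) :=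
    ⟨fun h => hT.injective_ker_of_extHatVanishesAll_quotient fun I => h _,
      hT.extHatVanishesAll_of_injective_ker⟩
  have hquot : (∀ I : Submodule R R, ExtHatVanishesAll R (ModuleCat.of R (R ⧸ I)) T dT) ↔
      ∀ c, Module.Injective R (LinearMap.ker (dT c)) :=
    ⟨hT.injective_ker_of_extHatVanishesAll_quotient,
      fun h _ => hT.extHatVanishesAll_of_injective_ker h _⟩
  exact ⟨hidim.trans hall.symm, hall.trans hquot.symm⟩
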